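/- arXiv:2208.05149 — 8 statements merged into one kernel-verified Lean document; each statement's English description precedes it below -/
import Mathlib

section
/- For every integer N ≥ 1, R(-1,-2N) = 0, and R(-1,0) = 1/2. -/
/-!
For even `n`, substituting `j = n - k` turns the zeta sum of `R(-1,-n)` into
`∑_{j<n} C(n,j) ζ(-1-j)`, the odd `j` contributing trivial zeros, and `ζ(-1-j) = -B_{j+2}/(j+2)`.
As `C(n,j)/(j+2) = (j+1) C(n+2,j+2)/((n+1)(n+2))` and `n!/(n+2)! = 1/((n+1)(n+2))`, it remains to
see `∑_{2 ≤ i ≤ n+1} (i-1) C(n+2,i) B_i = 1`. Reading `B_m(x) = ∑ C(m,i) B_i x^{m-i}` and its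
derivative at `x = 1` gives `∑_{i ≤ m} (i-1) C(m,i) B_i = (m-1) B_m(1) - B_m'(1)`; for `m = n+2`
this is `(n+1) B_{n+2}`, since `B_m'(1) = m B_{m-1}(1) = 0`, and the terms `i = 0, 1, m` account
for the rest.
-/

/-- `R (-m, -n)` from the paper: the residue
`(-1)^n m! n! / (m+n+1)! + ∑_{k even, 1 ≤ k ≤ n} C(n,k) ζ(k-m-n)`. -/
noncomputable def RRes (m n : ℕ) : ℂ :=
  (-1) ^ n * ((m.factorial : ℂ) * n.factorial / (m + n + 1).factorial) +
    ∑ k ∈ (Finset.range (n + 1)).filter (fun k => 1 ≤ k ∧ Even k),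
      (n.choose k : ℂ) * riemannZeta ((k : ℂ) - m - n)

open Finset

lemma sum_choose_mul_bernoulli (m : ℕ) :
    ∑ i ∈ range (m + 1), (m.choose i : ℚ) * bernoulli i = bernoulli' m := by
  rw [← Polynomial.bernoulli_eval_one, Polynomial.bernoulli, Polynomial.eval_finsetSum]
  refine sum_congr rfl fun i _ => ?_
  rw [Polynomial.eval_monomial, one_pow, mul_one, mul_comm]

lemma sum_sub_mul_choose_mul_bernoulli (m : ℕ) :
    ∑ i ∈ range (m + 1), ((m - i : ℕ) : ℚ) * m.choose i * bernoulli i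
      = m * bernoulli' (m - 1) := by
  have h := congrArg (Polynomial.eval (1 : ℚ)) (Polynomial.derivative_bernoulli m)
  rw [Polynomial.eval_mul, Polynomial.eval_natCast, Polynomial.bernoulli_eval_one] at h
  rw [← h, Polynomial.bernoulli, Polynomial.derivative_sum, Polynomial.eval_finsetSum]
  refine sum_congr rfl fun i _ => ?_
  rw [Polynomial.derivative_monomial, Polynomial.eval_monomial, one_pow, mul_one]
  ring

lemma sum_sub_one_mul_choose_mul_bernoulli (m : ℕ) :
    ∑ i ∈ range (m + 1), ((i : ℚ) - 1) * m.choose i * bernoulli i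
      = (m - 1) * bernoulli' m - m * bernoulli' (m - 1) := by
  rw [← sum_choose_mul_bernoulli, ← sum_sub_mul_choose_mul_bernoulli, mul_sum, ← sum_sub_distrib]
  refine sum_congr rfl fun i hi => ?_
  rw [Nat.cast_sub (mem_range_succ_iff.mp hi)]
  ring

lemma sum_range_add_one_mul_choose_add_two_mul_bernoulli {n : ℕ} (hn : Even n) (hn0 : n ≠ 0) :
    ∑ j ∈ range n, ((j : ℚ) + 1) * (n + 2).choose (j + 2) * bernoulli (j + 2) = 1 := by
  have h := sum_sub_one_mul_choose_mul_bernoulli (n + 2)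
  rw [sum_range_succ, sum_range_succ', sum_range_succ',
    bernoulli_eq_bernoulli'_of_ne_one (by omega : n + 2 ≠ 1), show n + 2 - 1 = n + 1 by omega,
    bernoulli'_eq_zero_of_odd hn.add_one (by omega)] at h
  simp only [Nat.cast_add, Nat.cast_one, add_sub_cancel_right, Nat.choose_self,
    Nat.choose_zero_right, bernoulli_zero] at h
  linear_combination h

lemma choose_div_add_two (n j : ℕ) :
    (n.choose j : ℚ) / (j + 2) = (j + 1) * (n + 2).choose (j + 2) / ((n + 1) * (n + 2)) := by
  have h₁ : ((n + 1 : ℕ) : ℚ) * n.choose j = (n + 1).choose (j + 1) * (j + 1 : ℕ) :=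
    mod_cast Nat.add_one_mul_choose_eq n j
  have h₂ : ((n + 2 : ℕ) : ℚ) * (n + 1).choose (j + 1) = (n + 2).choose (j + 2) * (j + 2 : ℕ) :=
    mod_cast Nat.add_one_mul_choose_eq (n + 1) (j + 1)
  push_cast at h₁ h₂
  rw [div_eq_div_iff (by positivity) (by positivity)]
  linear_combination (n + 2 : ℚ) * h₁ + (j + 1 : ℚ) * h₂

lemma sum_choose_mul_bernoulli_div {n : ℕ} (hn : Even n) (hn0 : n ≠ 0) :
    ∑ j ∈ range n, (n.choose j : ℚ) * (bernoulli (j + 2) / (j + 2)) = 1 / ((n + 1) * (n + 2)) := by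
  calc ∑ j ∈ range n, (n.choose j : ℚ) * (bernoulli (j + 2) / (j + 2))
      = ∑ j ∈ range n, (j + 1) * (n + 2).choose (j + 2) * bernoulli (j + 2) / ((n + 1) * (n + 2)) :=
        sum_congr rfl fun j _ => by rw [mul_div_assoc', mul_div_right_comm, choose_div_add_two]; ring
    _ = 1 / ((n + 1) * (n + 2)) := by
        rw [← sum_div, sum_range_add_one_mul_choose_add_two_mul_bernoulli hn hn0]

lemma riemannZeta_neg_one_sub_natCast (j : ℕ) :
    riemannZeta (-1 - j) = -((bernoulli (j + 2) : ℂ) / (j + 2)) := by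
  rw [show (-1 - j : ℂ) = -((j + 1 : ℕ) : ℂ) by push_cast; ring, riemannZeta_neg_nat_eq_bernoulli',
    ← bernoulli_eq_bernoulli'_of_ne_one (by omega)]
  push_cast
  ring

lemma sum_filter_even_choose_mul_riemannZeta {n : ℕ} (hn : Even n) :
    ∑ k ∈ (range (n + 1)).filter (fun k => 1 ≤ k ∧ Even k),
        (n.choose k : ℂ) * riemannZeta (k - 1 - n)
      = ∑ j ∈ range n, (n.choose j : ℂ) * riemannZeta (-1 - j) := by
  have h_even : ∀ j ∈ range n, (n.choose j : ℂ) * riemannZeta (-1 - j) ≠ 0 → Even j := by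
    rintro j - hj
    by_contra hodd
    obtain ⟨t, rfl⟩ := Nat.not_even_iff_odd.mp hodd
    apply hj
    rw [show (-1 - ((2 * t + 1 : ℕ) : ℂ)) = -2 * (t + 1) by push_cast; ring,
      riemannZeta_neg_two_mul_nat_add_one, mul_zero]
  rw [← sum_filter_of_ne h_even]
  refine sum_nbij' (n - ·) (n - ·) ?_ ?_ ?_ ?_ ?_
  · intro k hk
    simp only [mem_filter, mem_range] at hk ⊢
    exact ⟨by omega, (Nat.even_sub (by omega)).mpr (iff_of_true hn hk.2.2)⟩
  · intro j hj
    simp only [mem_filter, mem_range] at hj ⊢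
    exact ⟨by omega, by omega, (Nat.even_sub (by omega)).mpr (iff_of_true hn hj.2)⟩
  · intro k hk
    simp only [mem_filter, mem_range] at hk
    omega
  · intro j hj
    simp only [mem_filter, mem_range] at hj
    omega
  · intro k hk
    have hkn : k ≤ n := Nat.lt_succ_iff.mp (mem_range.mp (mem_filter.mp hk).1)
    rw [Nat.choose_symm hkn, Nat.cast_sub hkn]
    ring_nf

lemma RRes_one_eq_of_even {n : ℕ} (hn : Even n) :
    RRes 1 n = 1 / ((n + 1) * (n + 2)) + ∑ j ∈ range n, (n.choose j : ℂ) * riemannZeta (-1 - j) := by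
  have h_factorial : (n.factorial : ℂ) / (1 + n + 1).factorial = 1 / ((n + 1) * (n + 2)) := by
    rw [show 1 + n + 1 = n + 1 + 1 by ring, Nat.factorial_succ, Nat.factorial_succ]
    push_cast
    field_simp [n.factorial_ne_zero]
    ring
  rw [RRes, hn.neg_one_pow, one_mul, Nat.factorial_one, Nat.cast_one, one_mul, h_factorial,
    ← sum_filter_even_choose_mul_riemannZeta hn]

lemma RRes_one_eq_zero_of_even {n : ℕ} (hn : Even n) (hn0 : n ≠ 0) : RRes 1 n = 0 := by
  have h := congrArg (fun q : ℚ => (q : ℂ)) (sum_choose_mul_bernoulli_div hn hn0)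
  push_cast at h
  simp_rw [RRes_one_eq_of_even hn, riemannZeta_neg_one_sub_natCast, mul_neg, sum_neg_distrib]
  rw [h, add_neg_cancel]

/-- For every integer `N ≥ 1`, `R(-1,-2N) = 0`, and `R(-1,0) = 1/2`. -/
theorem RRes_one_even :
    (∀ N : ℕ, 1 ≤ N → RRes 1 (2 * N) = 0) ∧ RRes 1 0 = 1 / 2 :=
  ⟨fun N hN => RRes_one_eq_zero_of_even (even_two_mul N) (by omega), by simp [RRes, filter_singleton]⟩
end

section
/- For all positive integers m and n with m + n odd, (-1)^{n-1} · Σ_{j=1}^{n} C(n,j) · (-1)^j · ζ(j−m−n) + (-1)^{m-1} · Σ_{j=1}^{m} C(m,j) · (-1)^j · ζ(j−m−n) = m!·n!/(m+n+1)!. -/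
/-!
By `ζ(-k) = -B'ₖ₊₁ / (k + 1)` (with `B'₁ = 1/2`), the full sum
`∑_{j=0}^{n} C(n,j) (-1)^j ζ(j-m-n)` equals `-L(G_{m,n})`, where `L` is the umbral functional
`Xᵏ ↦ B'ₖ` on `ℚ[X]` and `G_{m,n}(x) = ∫₀ˣ tᵐ (t-1)ⁿ dt`. Since `∑ᵢ C(k,i) (-1)ⁱ B'ᵢ = B'ₖ`,
`L` is invariant under `x ↦ 1 - x`, while the substitution `t ↦ 1 - t` gives
`G_{n,m}(x) = (-1)^{m+n+1} (G_{m,n}(1-x) - G_{m,n}(1))`. For `m + n` odd this yields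
`L(G_{n,m}) = L(G_{m,n}) - G_{m,n}(1)`, and `G_{m,n}(1) = (-1)ⁿ m! n! / (m+n+1)!` is a Beta
integral. The `j = 0` terms `ζ(-m-n)` of the two sums cancel for the same parity reason.
-/

open Finset
open Polynomial hiding bernoulli

theorem Polynomial.eq_of_derivative_eq_of_eval_zero_eq {R : Type*} [Ring R] [IsAddTorsionFree R]
    {p q : R[X]} (hd : derivative p = derivative q) (h0 : p.eval 0 = q.eval 0) : p = q := by
  have h := eq_C_of_derivative_eq_zero (p := p - q) (by rw [derivative_sub, hd, sub_self])
  rwa [coeff_zero_eq_eval_zero, eval_sub, h0, sub_self, map_zero, sub_eq_zero] at h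

theorem neg_one_pow_pred_mul_sum_Icc_one {R : Type*} [CommRing R] (f : ℕ → R) (n : ℕ) :
    (-1 : R) ^ (n - 1) * ∑ i ∈ Icc 1 n, f i =
      (-1) ^ n * (f 0 - ∑ i ∈ range (n + 1), f i) := by
  cases n with
  | zero => simp
  | succ n =>
    rw [← Finset.Ico_add_one_right_eq_Icc, sum_Ico_eq_sum_range, sum_range_succ']
    simp only [Nat.add_sub_cancel, add_comm 1]
    ring

noncomputable def umbralBernoulli' : ℚ[X] →ₗ[ℚ] ℚ :=
  lsum fun k => bernoulli' k • LinearMap.id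

theorem umbralBernoulli'_C_mul_X_pow (a : ℚ) (k : ℕ) :
    umbralBernoulli' (C a * X ^ k) = bernoulli' k * a := by
  simp [umbralBernoulli', C_mul_X_pow_eq_monomial, lsum_apply, sum_monomial_index]

theorem umbralBernoulli'_C (a : ℚ) : umbralBernoulli' (C a) = a := by
  simpa using umbralBernoulli'_C_mul_X_pow a 0

theorem sum_range_succ_choose_mul_bernoulli (k : ℕ) :
    ∑ i ∈ range (k + 1), (k.choose i : ℚ) * bernoulli i = bernoulli' k := by
  rw [← Polynomial.bernoulli_eval_one, Polynomial.bernoulli, eval_finsetSum]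
  simp [mul_comm]

theorem umbralBernoulli'_one_sub_X_pow (k : ℕ) :
    umbralBernoulli' ((1 - X) ^ k) = bernoulli' k := by
  rw [sub_eq_neg_add, add_pow, map_sum, ← sum_range_succ_choose_mul_bernoulli]
  refine sum_congr rfl fun i _ => ?_
  have hterm : (-X) ^ i * 1 ^ (k - i) * (k.choose i : ℚ[X]) =
      C ((-1 : ℚ) ^ i * k.choose i) * X ^ i := by
    rw [neg_pow, one_pow, mul_one, C_mul, C_pow, C_neg, C_1, C_eq_natCast]
    ring
  rw [hterm, umbralBernoulli'_C_mul_X_pow, bernoulli]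
  ring

theorem umbralBernoulli'_comp_one_sub_X (f : ℚ[X]) :
    umbralBernoulli' (f.comp (1 - X)) = umbralBernoulli' f := by
  induction f using Polynomial.induction_on' with
  | add p q hp hq => rw [add_comp, map_add, map_add, hp, hq]
  | monomial k a =>
    rw [← C_mul_X_pow_eq_monomial, ← smul_eq_C_mul, smul_comp, map_smul, map_smul, X_pow_comp,
      umbralBernoulli'_one_sub_X_pow, ← mul_one (X ^ k), ← C_1, mul_comm,
      umbralBernoulli'_C_mul_X_pow, mul_one]

/-- `∫₀ˣ tᵐ (t - 1)ⁿ dt`, expanded by the binomial theorem. -/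
noncomputable def betaPrimitive (m n : ℕ) : ℚ[X] :=
  ∑ j ∈ range (n + 1),
    C ((-1 : ℚ) ^ j * n.choose j / (m + n - j + 1 : ℕ)) * X ^ (m + n - j + 1)

theorem derivative_betaPrimitive (m n : ℕ) :
    derivative (betaPrimitive m n) = X ^ m * (X - 1) ^ n := by
  rw [betaPrimitive, derivative_sum, sub_eq_neg_add, add_pow, mul_sum]
  refine sum_congr rfl fun j hj => ?_
  have hjn : j ≤ n := Nat.lt_succ_iff.mp (mem_range.mp hj)
  rw [derivative_C_mul_X_pow, div_mul_cancel₀ _ (by positivity), Nat.add_sub_cancel,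
    Nat.add_sub_assoc hjn, pow_add, C_mul, C_pow, C_neg, C_1, C_eq_natCast]
  ring

theorem eval_zero_betaPrimitive (m n : ℕ) : (betaPrimitive m n).eval 0 = 0 := by
  simp [betaPrimitive, eval_finsetSum]

theorem betaPrimitive_eq_of_derivative {m n : ℕ} {p : ℚ[X]}
    (hd : derivative p = X ^ m * (X - 1) ^ n) (h0 : p.eval 0 = 0) : p = betaPrimitive m n :=
  eq_of_derivative_eq_of_eval_zero_eq (by rw [hd, derivative_betaPrimitive])
    (by rw [h0, eval_zero_betaPrimitive])

theorem betaPrimitive_swap (m n : ℕ) :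
    betaPrimitive n m =
      (-1 : ℚ) ^ (m + n + 1) •
        ((betaPrimitive m n).comp (1 - X) - C ((betaPrimitive m n).eval 1)) := by
  refine (betaPrimitive_eq_of_derivative ?_ ?_).symm
  · have hsq : ((-1 : ℚ[X]) ^ m * (-1) ^ n) ^ 2 = 1 := by
      rw [← pow_add, ← pow_mul, pow_mul', neg_one_sq, one_pow]
    rw [derivative_smul, derivative_sub, derivative_C, sub_zero, derivative_comp,
      derivative_betaPrimitive, smul_eq_C_mul]
    simp only [derivative_sub, derivative_one, derivative_X, mul_comp, pow_comp, X_comp, sub_comp,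
      one_comp, map_pow, map_neg, map_one]
    rw [show (1 : ℚ[X]) - X - 1 = -X by ring, show (1 : ℚ[X]) - X = -(X - 1) by ring, neg_pow,
      neg_pow (X - 1)]
    linear_combination (X : ℚ[X]) ^ n * (X - 1) ^ m * hsq
  · simp [eval_comp]

theorem add_one_mul_betaPrimitive_add_add_one_mul_betaPrimitive (m n : ℕ) :
    ((m : ℚ[X]) + 1) * betaPrimitive m (n + 1) + ((n : ℚ[X]) + 1) * betaPrimitive (m + 1) n =
      X ^ (m + 1) * (X - 1) ^ (n + 1) := by
  apply eq_of_derivative_eq_of_eval_zero_eq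
  · simp only [derivative_mul, derivative_betaPrimitive, derivative_pow_succ,
      derivative_sub, derivative_X, derivative_one, derivative_natCast, map_add, map_natCast,
      map_one]
    ring
  · simp [eval_zero_betaPrimitive]

theorem eval_one_betaPrimitive (m n : ℕ) :
    (betaPrimitive m n).eval 1 =
      (-1) ^ n * (m.factorial * n.factorial / (m + n + 1).factorial) := by
  induction n generalizing m with
  | zero =>
    simp [betaPrimitive, Nat.factorial_succ]
    field_simp
  | succ n ih =>
    have h := congrArg (eval 1) (add_one_mul_betaPrimitive_add_add_one_mul_betaPrimitive m n)
    simp only [eval_add, eval_mul, eval_natCast, eval_pow, eval_sub, eval_X, eval_one, sub_self,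
      zero_pow n.succ_ne_zero, mul_zero, ih] at h
    rw [← mul_right_inj' (by positivity : (m : ℚ) + 1 ≠ 0), eq_neg_of_add_eq_zero_left h,
      show m + 1 + n + 1 = m + (n + 1) + 1 by ring, Nat.factorial_succ m, Nat.factorial_succ n]
    push_cast
    ring

theorem umbralBernoulli'_betaPrimitive_swap (m n : ℕ) :
    umbralBernoulli' (betaPrimitive n m) = (-1) ^ (m + n + 1) *
      (umbralBernoulli' (betaPrimitive m n) -
        (-1) ^ n * (m.factorial * n.factorial / (m + n + 1).factorial)) := by
  rw [betaPrimitive_swap, map_smul, map_sub, umbralBernoulli'_comp_one_sub_X, umbralBernoulli'_C,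
    eval_one_betaPrimitive, smul_eq_mul]

theorem sum_range_choose_mul_riemannZeta (m n : ℕ) :
    ∑ j ∈ range (n + 1), (n.choose j : ℂ) * (-1) ^ j * riemannZeta ((j : ℂ) - m - n) =
      -(umbralBernoulli' (betaPrimitive m n) : ℂ) := by
  rw [betaPrimitive, map_sum, Rat.cast_sum, ← sum_neg_distrib]
  refine sum_congr rfl fun j hj => ?_
  have hjn : j ≤ n := Nat.lt_succ_iff.mp (mem_range.mp hj)
  have hs : (j : ℂ) - m - n = -((m + n - j : ℕ) : ℂ) := by
    rw [Nat.cast_sub (by omega)]; push_cast; ring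
  rw [umbralBernoulli'_C_mul_X_pow, hs, riemannZeta_neg_nat_eq_bernoulli']
  push_cast
  ring

theorem zeta_value_reciprocity_general (m n : ℕ) (hodd : Odd (m + n)) :
    (-1 : ℂ) ^ (n - 1) *
        ∑ j ∈ Finset.Icc 1 n, (n.choose j : ℂ) * (-1) ^ j * riemannZeta ((j : ℂ) - m - n)
      + (-1 : ℂ) ^ (m - 1) *
        ∑ j ∈ Finset.Icc 1 m, (m.choose j : ℂ) * (-1) ^ j * riemannZeta ((j : ℂ) - m - n)
      = (m.factorial : ℂ) * n.factorial / (m + n + 1).factorial := by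
  have hsum_m := sum_range_choose_mul_riemannZeta n m
  simp only [sub_right_comm _ (n : ℂ) (m : ℂ)] at hsum_m
  have hswap := umbralBernoulli'_betaPrimitive_swap m n
  rw [hodd.add_one.neg_one_pow, one_mul] at hswap
  have hsq : (-1 : ℂ) ^ n * (-1) ^ n = 1 := by rw [← mul_pow]; norm_num
  have hsign : (-1 : ℂ) ^ m = -(-1) ^ n := by
    have hmn : (-1 : ℂ) ^ m * (-1) ^ n = -1 := by rw [← pow_add, hodd.neg_one_pow]
    linear_combination (-1 : ℂ) ^ n * hmn - (-1 : ℂ) ^ m * hsq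
  rw [neg_one_pow_pred_mul_sum_Icc_one, neg_one_pow_pred_mul_sum_Icc_one,
    sum_range_choose_mul_riemannZeta, hsum_m, hswap, hsign]
  simp only [Nat.choose_zero_right, pow_zero]
  push_cast
  linear_combination (m.factorial : ℂ) * n.factorial / (m + n + 1).factorial * hsq

/-- For `m, n ≥ 1` with `m + n` odd,
`(-1)^{n-1} ∑_{j=1}^{n} C(n,j) (-1)^j ζ(j-m-n)
 + (-1)^{m-1} ∑_{j=1}^{m} C(m,j) (-1)^j ζ(j-m-n) = m! n! / (m+n+1)!`. -/
theorem zeta_value_reciprocity (m n : ℕ) (hm : 1 ≤ m) (hn : 1 ≤ n) (hodd : Odd (m + n)) :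
    (-1 : ℂ) ^ (n - 1) *
        ∑ j ∈ Finset.Icc 1 n, (n.choose j : ℂ) * (-1) ^ j * riemannZeta ((j : ℂ) - m - n)
      + (-1 : ℂ) ^ (m - 1) *
        ∑ j ∈ Finset.Icc 1 m, (m.choose j : ℂ) * (-1) ^ j * riemannZeta ((j : ℂ) - m - n)
      = (m.factorial : ℂ) * n.factorial / (m + n + 1).factorial :=
  zeta_value_reciprocity_general m n hodd
end

section
/- For every integer N ≥ 1, Σ_{j=1}^{N−1} C(2N−1,2j) · B_{2N−2j}/(2N−2j) = 1/2 − 1/(2N). -/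
/-!
Since `C(2N-1, 2j) / (2N-2j) = C(2N, 2j) / 2N`, the sum is `1/2N` times
`∑_{0<j<N} C(2N, 2j) B_{2N-2j}`, which the symmetry `j ↦ N - j` turns into
`∑_{0<j<N} C(2N, 2j) B_{2j}`. The recurrence `∑_{k<2N} C(2N, k) B_k = 2N` evaluates this:
among the odd indices only `B_1 = 1/2` survives and contributes `N`, and `B_0 = 1`,
so the sum is `N - 1`.
-/

open Finset

theorem Finset.sum_range_two_mul {M : Type*} [AddCommMonoid M] (f : ℕ → M) (n : ℕ) :
    ∑ k ∈ range (2 * n), f k = ∑ j ∈ range n, (f (2 * j) + f (2 * j + 1)) := by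
  induction n with
  | zero => simp
  | succ n ih => rw [Nat.mul_succ, sum_range_succ, sum_range_succ, ih, sum_range_succ, add_assoc]

theorem Nat.cast_choose_sub_one_div_sub {K : Type*} [Field K] [CharZero K] (n k : ℕ)
    (hk : k < n) : ((n - 1).choose k : K) / (n - k : ℕ) = n.choose k / n := by
  have h := Nat.choose_mul_succ_eq (n - 1) k
  rw [Nat.sub_add_cancel (by omega)] at h
  rw [div_eq_div_iff (by simp; omega) (by simp; omega)]
  exact_mod_cast h

theorem sum_Ico_choose_two_mul_mul_reflect {R : Type*} [Semiring R] (f : ℕ → R) (N : ℕ) :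
    ∑ j ∈ Ico 1 N, ((2 * N).choose (2 * j) : R) * f (2 * N - 2 * j) =
      ∑ j ∈ Ico 1 N, ((2 * N).choose (2 * j) : R) * f (2 * j) := by
  have h := sum_Ico_reflect (fun j ↦ ((2 * N).choose (2 * j) : R) * f (2 * j)) 1 N.le_succ
  rw [Nat.add_sub_cancel_left, Nat.add_sub_cancel] at h
  rw [← h]
  refine sum_congr rfl fun j hj ↦ ?_
  have hj : j ≤ N := (mem_Ico.mp hj).2.le
  rw [Nat.mul_sub, Nat.choose_symm (by omega)]

theorem sum_range_choose_two_mul_mul_bernoulli'_two_mul_add_one (N : ℕ) :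
    ∑ j ∈ range N, ((2 * N).choose (2 * j + 1) : ℚ) * bernoulli' (2 * j + 1) = N := by
  cases N with
  | zero => simp
  | succ N =>
    have hvanish (j : ℕ) : bernoulli' (2 * (j + 1) + 1) = 0 :=
      bernoulli'_eq_zero_of_odd (odd_two_mul_add_one _) (by omega)
    rw [sum_range_succ']
    simp only [hvanish, mul_zero, sum_const_zero, zero_add, Nat.choose_one_right, bernoulli'_one]
    push_cast
    ring

theorem sum_range_choose_two_mul_mul_bernoulli'_two_mul (N : ℕ) :
    ∑ j ∈ range N, ((2 * N).choose (2 * j) : ℚ) * bernoulli' (2 * j) = N := by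
  have h := sum_bernoulli' (2 * N)
  rw [sum_range_two_mul, sum_add_distrib,
    sum_range_choose_two_mul_mul_bernoulli'_two_mul_add_one] at h
  push_cast at h
  linarith

theorem sum_Ico_choose_two_mul_mul_bernoulli'_two_mul {N : ℕ} (hN : 0 < N) :
    ∑ j ∈ Ico 1 N, ((2 * N).choose (2 * j) : ℚ) * bernoulli' (2 * j) = N - 1 := by
  have h := sum_range_choose_two_mul_mul_bernoulli'_two_mul N
  rw [sum_range_eq_add_Ico _ hN] at h
  simp only [mul_zero, Nat.choose_zero_right, Nat.cast_one, bernoulli'_zero, one_mul] at h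
  linarith

/-- For every integer `N ≥ 1`,
`∑_{j=1}^{N-1} C(2N-1,2j) B_{2N-2j}/(2N-2j) = 1/2 - 1/(2N)`
(with the convention `B₁ = 1/2`, i.e. Mathlib's `bernoulli'`). -/
theorem bernoulli_odd_binom_sum (N : ℕ) (hN : 1 ≤ N) :
    ∑ j ∈ Finset.Icc 1 (N - 1),
        ((2 * N - 1).choose (2 * j) : ℚ) * bernoulli' (2 * N - 2 * j) / ((2 * N - 2 * j : ℕ) : ℚ)
      = 1 / 2 - 1 / (2 * (N : ℚ)) := by
  have hIcc : Icc 1 (N - 1) = Ico 1 N := by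
    ext j
    simp only [mem_Icc, mem_Ico]
    omega
  calc _ = ∑ j ∈ Ico 1 N,
          ((2 * N).choose (2 * j) : ℚ) * bernoulli' (2 * N - 2 * j) / ((2 * N : ℕ) : ℚ) := by
        rw [hIcc]
        refine sum_congr rfl fun j hj ↦ ?_
        rw [mul_div_right_comm, mul_div_right_comm,
          Nat.cast_choose_sub_one_div_sub _ _ (by simp only [mem_Ico] at hj; omega)]
    _ = (N - 1) / (2 * N) := by
        rw [← sum_div, sum_Ico_choose_two_mul_mul_reflect,
          sum_Ico_choose_two_mul_mul_bernoulli'_two_mul hN, Nat.cast_mul, Nat.cast_two]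
    _ = 1 / 2 - 1 / (2 * (N : ℚ)) := by
        field_simp
end

section
/- Let α : ℕ → ℂ be an arithmetic function and δ > 0 a real number such that the series Σ_{n≥1} |α(n)| · n^{−σ} converges for every real σ > δ. Define α̃ : ℕ → ℂ by α̃(n) = Σ_{d | n} μ(d) · α(n/d), where μ is the Möbius function. Then for all complex numbers s₁, s₂ with Re s₂ > max(1, δ) and Re(s₁ + s₂) > max(2, 1 + δ), the double series Σ_{m₁≥1} Σ_{m₂≥1} α̃(m₂) / (m₁^{s₁} · (m₁ + m₂)^{s₂}) converges absolutely. -/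
/-!
Choose `σ` with `max 1 δ < σ < min (Re s₂) (Re (s₁ + s₂) - 1)`. Since `α̃ = μ ⍟ α` is the Dirichlet
convolution of two sequences whose L-series converge absolutely at `σ`, so does the L-series of `α̃`.
The bound `m₁ ^ (Re s₂ - σ) * m₂ ^ σ ≤ (m₁ + m₂) ^ Re s₂` then dominates the double series by the
product of `∑ m₁ ^ (σ - Re (s₁ + s₂))` and `∑ |α̃ m₂| * m₂ ^ (-σ)`.
-/

open LSeries
open scoped ArithmeticFunction.Moebius

lemma LSeriesSummable_ofReal_iff_summable_norm_mul_rpow (f : ℕ → ℂ) (σ : ℝ) :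
    LSeriesSummable f σ ↔ Summable fun n : ℕ => ‖f (n + 1)‖ * ((n : ℝ) + 1) ^ (-σ) := by
  rw [LSeriesSummable, ← summable_norm_iff, ← summable_nat_add_iff 1]
  refine summable_congr fun n => ?_
  rw [norm_term_eq, if_neg n.succ_ne_zero, Complex.ofReal_re, Real.rpow_neg (by positivity),
    div_eq_mul_inv]
  push_cast
  rfl

open scoped LSeries.notation in
lemma moebius_convolution_apply (f : ℕ → ℂ) (n : ℕ) :
    (↗μ ⍟ f) n = ∑ d ∈ n.divisors, (μ d : ℂ) * f (n / d) := by
  rw [convolution_def]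
  exact Nat.sum_divisorsAntidiagonal fun d e => (μ d : ℂ) * f e

lemma Real.rpow_sub_mul_rpow_le_add_rpow {x y σ b : ℝ} (hx : 0 < x) (hy : 0 ≤ y)
    (hσ : 0 ≤ σ) (hσb : σ ≤ b) : x ^ (b - σ) * y ^ σ ≤ (x + y) ^ b :=
  calc x ^ (b - σ) * y ^ σ ≤ (x + y) ^ (b - σ) * (x + y) ^ σ := by
        gcongr <;> linarith
    _ = (x + y) ^ b := by rw [← Real.rpow_add (by linarith), sub_add_cancel]

lemma norm_div_cpow_mul_add_cpow_le (c : ℂ) {x y : ℝ} (hx : 0 < x) (hy : 0 < y) (s₁ s₂ : ℂ)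
    {σ : ℝ} (hσ : 0 ≤ σ) (hσs₂ : σ ≤ s₂.re) :
    ‖c / ((x : ℂ) ^ s₁ * ((x + y : ℝ) : ℂ) ^ s₂)‖ ≤
      x ^ (-(s₁.re + s₂.re - σ)) * (‖c‖ * y ^ (-σ)) := by
  rw [norm_div, norm_mul, Complex.norm_cpow_eq_rpow_re_of_pos hx,
    Complex.norm_cpow_eq_rpow_re_of_pos (by linarith)]
  calc ‖c‖ / (x ^ s₁.re * (x + y) ^ s₂.re)
      ≤ ‖c‖ / (x ^ s₁.re * (x ^ (s₂.re - σ) * y ^ σ)) := by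
        gcongr
        exact Real.rpow_sub_mul_rpow_le_add_rpow hx hy.le hσ hσs₂
    _ = x ^ (-(s₁.re + s₂.re - σ)) * (‖c‖ * y ^ (-σ)) := by
        rw [Real.rpow_neg hx.le, Real.rpow_neg hy.le, add_sub_assoc, Real.rpow_add hx]
        field_simp

lemma summable_norm_div_cpow_mul_add_cpow {β : ℕ → ℂ} {σ : ℝ} (hβ : LSeriesSummable β σ)
    {s₁ s₂ : ℂ} (hσ : 0 ≤ σ) (hσs₂ : σ ≤ s₂.re) (hσs₁₂ : 1 < (s₁ + s₂).re - σ) :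
    Summable fun p : ℕ × ℕ =>
      ‖β (p.2 + 1) / (((p.1 : ℂ) + 1) ^ s₁ * ((p.1 : ℂ) + 1 + ((p.2 : ℂ) + 1)) ^ s₂)‖ := by
  have hm₁ : Summable fun m : ℕ => ((m : ℝ) + 1) ^ (-(s₁.re + s₂.re - σ)) := by
    have := (Real.summable_nat_rpow (p := -(s₁.re + s₂.re - σ))).mpr (by
      rw [Complex.add_re] at hσs₁₂; linarith)
    exact_mod_cast (summable_nat_add_iff 1).mpr this
  have hm₂ := (LSeriesSummable_ofReal_iff_summable_norm_mul_rpow β σ).mp hβ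
  refine .of_nonneg_of_le (fun _ => norm_nonneg _) (fun ⟨m, n⟩ => ?_)
    (hm₁.mul_of_nonneg hm₂ (fun _ => by positivity) (fun _ => by positivity))
  have := norm_div_cpow_mul_add_cpow_le (β (n + 1)) (x := m + 1) (y := n + 1) (by positivity)
    (by positivity) s₁ s₂ hσ hσs₂
  exact_mod_cast this

theorem double_series_abs_conv_tilde_general (α : ℕ → ℂ) (δ : ℝ)
    (hα : ∀ σ : ℝ, δ < σ → Summable (fun n : ℕ => ‖α (n + 1)‖ * ((n : ℝ) + 1) ^ (-σ)))
    (αt : ℕ → ℂ)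
    (hαt : ∀ n : ℕ, αt n = ∑ d ∈ n.divisors, ((ArithmeticFunction.moebius d : ℤ) : ℂ) * α (n / d))
    (s₁ s₂ : ℂ) (hs₂ : max 1 δ < s₂.re) (hs₁₂ : max 2 (1 + δ) < (s₁ + s₂).re) :
    Summable (fun p : ℕ × ℕ =>
      ‖αt (p.2 + 1) / ((((p.1 : ℂ) + 1) ^ s₁) * (((p.1 : ℂ) + 1 + ((p.2 : ℂ) + 1)) ^ s₂))‖) := by
  obtain ⟨σ, hσ, hσ'⟩ : ∃ σ, max 1 δ < σ ∧ σ < min s₂.re ((s₁ + s₂).re - 1) :=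
    exists_between (lt_min hs₂ (by rw [max_lt_iff] at hs₁₂ ⊢; constructor <;> linarith))
  obtain ⟨hσ1, hσδ⟩ := max_lt_iff.mp hσ
  obtain ⟨hσs₂, hσs₁₂⟩ := lt_min_iff.mp hσ'
  have hμ : LSeriesSummable (fun n => (μ n : ℂ)) σ :=
    ArithmeticFunction.LSeriesSummable_moebius_iff.mpr hσ1
  have hα' := (LSeriesSummable_ofReal_iff_summable_norm_mul_rpow α σ).mpr (hα σ hσδ)
  have hαt' : LSeriesSummable αt σ :=
    (hμ.convolution hα').congr' _ (.of_forall fun n => by rw [moebius_convolution_apply, hαt])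
  exact summable_norm_div_cpow_mul_add_cpow hαt' (by linarith) hσs₂.le (by linarith)

/-- Let `α : ℕ → ℂ` and `δ > 0` be such that `∑_{n≥1} |α(n)| n^{-σ}` converges for every
real `σ > δ`. Let `α̃(n) = ∑_{d ∣ n} μ(d) α(n/d)`. Then for all complex `s₁, s₂` with
`Re s₂ > max(1, δ)` and `Re(s₁+s₂) > max(2, 1+δ)`, the double series
`∑_{m₁≥1} ∑_{m₂≥1} α̃(m₂) / (m₁^{s₁} (m₁+m₂)^{s₂})` converges absolutely. -/
theorem double_series_abs_conv_tilde (α : ℕ → ℂ) (δ : ℝ) (hδ : 0 < δ)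
    (hα : ∀ σ : ℝ, δ < σ → Summable (fun n : ℕ => ‖α (n + 1)‖ * ((n : ℝ) + 1) ^ (-σ)))
    (αt : ℕ → ℂ)
    (hαt : ∀ n : ℕ, αt n = ∑ d ∈ n.divisors, ((ArithmeticFunction.moebius d : ℤ) : ℂ) * α (n / d))
    (s₁ s₂ : ℂ) (hs₂ : max 1 δ < s₂.re) (hs₁₂ : max 2 (1 + δ) < (s₁ + s₂).re) :
    Summable (fun p : ℕ × ℕ =>
      ‖αt (p.2 + 1) / ((((p.1 : ℂ) + 1) ^ s₁) * (((p.1 : ℂ) + 1 + ((p.2 : ℂ) + 1)) ^ s₂))‖) :=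
  double_series_abs_conv_tilde_general α δ hα αt hαt s₁ s₂ hs₂ hs₁₂
end

section
/- For all complex numbers s₁, s₂ with Re s₂ > 1 and Re(s₁ + s₂) > 2, the double series Σ_{m₁≥1} Σ_{m₂≥1} Λ(m₂) / (m₁^{s₁} · (m₁ + m₂)^{s₂}) converges absolutely, where Λ is the von Mangoldt function. -/
/-!
For `0 ≤ b ≤ Re s₂` we have `(m + n) ^ Re s₂ ≥ m ^ (Re s₂ - b) * n ^ b`, so the terms are dominated
by the product `m ^ -(Re s₁ + Re s₂ - b) * (Λ n / n ^ b)`. Any `b` with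
`1 < b < min (Re s₂) (Re (s₁ + s₂) - 1)` makes both factors summable.
-/

open ArithmeticFunction Real

lemma summable_natCast_add_one_rpow_inv {p : ℝ} (hp : 1 < p) :
    Summable (fun n : ℕ => (((n : ℝ) + 1) ^ p)⁻¹) :=
  ((summable_nat_add_iff 1).mpr (Real.summable_nat_rpow_inv.mpr hp)).congr fun n => by
    push_cast; rfl

lemma summable_vonMangoldt_div_rpow {b : ℝ} (hb : 1 < b) :
    Summable (fun n : ℕ => Λ (n + 1) / ((n : ℝ) + 1) ^ b) := by
  have h := LSeriesSummable_vonMangoldt (s := (b : ℂ)) (by simpa using hb)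
  rw [LSeriesSummable, ← summable_norm_iff, ← summable_nat_add_iff 1] at h
  refine h.congr fun n => ?_
  rw [LSeries.norm_term_eq, if_neg n.succ_ne_zero]
  simp [abs_of_nonneg vonMangoldt_nonneg]

lemma rpow_mul_rpow_le_add_rpow_add {x y a b : ℝ} (hx : 0 ≤ x) (hy : 0 ≤ y) (ha : 0 ≤ a)
    (hb : 0 ≤ b) : x ^ a * y ^ b ≤ (x + y) ^ (a + b) := by
  rw [rpow_add_of_nonneg (add_nonneg hx hy) ha hb]
  gcongr <;> linarith

lemma div_rpow_mul_add_rpow_le {x y c σ₁ σ₂ b : ℝ} (hx : 0 < x) (hy : 0 < y) (hc : 0 ≤ c)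
    (hb : 0 ≤ b) (hbσ₂ : b ≤ σ₂) :
    c / (x ^ σ₁ * (x + y) ^ σ₂) ≤ (x ^ (σ₁ + σ₂ - b))⁻¹ * (c / y ^ b) := by
  have hden : x ^ (σ₁ + σ₂ - b) * y ^ b ≤ x ^ σ₁ * (x + y) ^ σ₂ := by
    calc x ^ (σ₁ + σ₂ - b) * y ^ b = x ^ σ₁ * (x ^ (σ₂ - b) * y ^ b) := by
          rw [add_sub_assoc, rpow_add hx, mul_assoc]
      _ ≤ x ^ σ₁ * (x + y) ^ (σ₂ - b + b) := by
          gcongr; exact rpow_mul_rpow_le_add_rpow_add hx.le hy.le (by linarith) hb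
      _ = x ^ σ₁ * (x + y) ^ σ₂ := by rw [sub_add_cancel]
  rw [inv_mul_eq_div, div_div, mul_comm (y ^ b)]
  exact div_le_div_of_nonneg_left hc (by positivity) hden

lemma norm_ofReal_div_cpow_mul_add_cpow {x y : ℝ} (hx : 0 < x) (hy : 0 < y) (c : ℝ)
    (s₁ s₂ : ℂ) :
    ‖(c : ℂ) / ((x : ℂ) ^ s₁ * ((x : ℂ) + y) ^ s₂)‖ = |c| / (x ^ s₁.re * (x + y) ^ s₂.re) := by
  rw [norm_div, norm_mul, ← Complex.ofReal_add, Complex.norm_cpow_eq_rpow_re_of_pos hx,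
    Complex.norm_cpow_eq_rpow_re_of_pos (add_pos hx hy), Complex.norm_real, norm_eq_abs]

/-- For all complex `s₁, s₂` with `Re s₂ > 1` and `Re(s₁+s₂) > 2`, the double series
`∑_{m₁≥1} ∑_{m₂≥1} Λ(m₂) / (m₁^{s₁} (m₁+m₂)^{s₂})` converges absolutely,
where `Λ` is the von Mangoldt function. -/
theorem double_series_abs_conv_vonMangoldt (s₁ s₂ : ℂ)
    (hs₂ : 1 < s₂.re) (hs₁₂ : 2 < (s₁ + s₂).re) :
    Summable (fun p : ℕ × ℕ =>
      ‖((ArithmeticFunction.vonMangoldt (p.2 + 1) : ℝ) : ℂ) /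
        ((((p.1 : ℂ) + 1) ^ s₁) * (((p.1 : ℂ) + 1 + ((p.2 : ℂ) + 1)) ^ s₂))‖) := by
  rw [Complex.add_re] at hs₁₂
  obtain ⟨b, hb₁, hb⟩ := exists_between (lt_min hs₂ (by linarith : 1 < s₁.re + s₂.re - 1))
  obtain ⟨hbσ₂, hbσ⟩ := lt_min_iff.mp hb
  have hmajorant :=
    (summable_natCast_add_one_rpow_inv (by linarith : 1 < s₁.re + s₂.re - b)).mul_of_nonneg
      (summable_vonMangoldt_div_rpow hb₁) (fun _ => by positivity)
      (fun _ => div_nonneg vonMangoldt_nonneg (by positivity))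
  refine hmajorant.of_nonneg_of_le (fun _ => norm_nonneg _) fun ⟨m, n⟩ => ?_
  have hterm := norm_ofReal_div_cpow_mul_add_cpow (x := m + 1) (y := n + 1) (by positivity)
    (by positivity) (Λ (n + 1)) s₁ s₂
  push_cast at hterm
  rw [hterm, abs_of_nonneg vonMangoldt_nonneg]
  exact div_rpow_mul_add_rpow_le (by positivity) (by positivity) vonMangoldt_nonneg
    (by linarith) hbσ₂.le
end

section
/- Let k ≥ 2 be an even integer and h ≥ 0 an integer. Then lim_{s → −(k+h)} (s + k + h) · Γ'(s + k)/Γ(s) = (−1)^{k−1} · (k+h)!/h!, where the limit is taken over complex s (with s avoiding the poles of the expression); that is, the function Γ'(s+k)/Γ(s) has a simple pole at s = −(k+h) with residue (−1)^{k−1}(k+h)!/h!. -/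
/-! `1/Γ` is entire, and the recursion `1/Γ(s) = s/Γ(s+1)` shows by induction that its
derivative at `-n` is `(-1)^n n!`. Writing `Γ' = -(1/Γ)'/(1/Γ)^2`, the function `Γ'` has a
double pole at `-h` with `(z+h)^2 Γ'(z) → -1/((-1)^h h!)`, while
`1/Γ(s)/(s+k+h) → (-1)^(k+h) (k+h)!` at `-(k+h)`. Multiplying the two limits gives the
residue `-(-1)^k (k+h)!/h!`, which equals `(-1)^(k-1) (k+h)!/h!` as soon as `k ≥ 1`. -/

open Filter Topology
open scoped Nat

namespace Complex

theorem hasDerivAt_inv_Gamma_of_add_one {x d : ℂ}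
    (hd : HasDerivAt (fun s => (Gamma s)⁻¹) d (x + 1)) :
    HasDerivAt (fun s => (Gamma s)⁻¹) ((Gamma (x + 1))⁻¹ + x * d) x := by
  rw [funext one_div_Gamma_eq_self_mul_one_div_Gamma_add_one]
  simpa only [one_mul] using (hasDerivAt_id' x).fun_mul (hd.comp_add_const x 1)

theorem hasDerivAt_inv_Gamma_neg_nat (n : ℕ) :
    HasDerivAt (fun s => (Gamma s)⁻¹) ((-1) ^ n * n !) (-n) := by
  induction n with
  | zero =>
    simpa using hasDerivAt_inv_Gamma_of_add_one (differentiable_one_div_Gamma (0 + 1)).hasDerivAt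
  | succ n ih =>
    convert hasDerivAt_inv_Gamma_of_add_one (x := -(n + 1)) (by simpa using ih) using 1
    · simp [Gamma_neg_nat_eq_zero, Nat.factorial_succ]; ring
    · simp

theorem tendsto_inv_Gamma_div_add_nat (n : ℕ) :
    Tendsto (fun s => (Gamma s)⁻¹ / (s + n)) (𝓝[≠] (-n)) (𝓝 ((-1) ^ n * n !)) := by
  refine (hasDerivAt_iff_tendsto_slope.mp (hasDerivAt_inv_Gamma_neg_nat n)).congr fun s => ?_
  simp [slope_def_field, Gamma_neg_nat_eq_zero]

theorem deriv_Gamma_eq_neg_deriv_inv_Gamma_div {z : ℂ} (hz : Gamma z ≠ 0) :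
    deriv Gamma z = -deriv (fun s => (Gamma s)⁻¹) z / (Gamma z)⁻¹ ^ 2 := by
  have := (differentiable_one_div_Gamma z).hasDerivAt.fun_inv (inv_ne_zero hz)
  simp only [inv_inv] at this
  exact this.deriv

theorem tendsto_sq_mul_deriv_Gamma_neg_nat (n : ℕ) :
    Tendsto (fun z => (z + n) ^ 2 * deriv Gamma z) (𝓝[≠] (-n))
      (𝓝 (-((-1 : ℂ) ^ n * n !)⁻¹)) := by
  set c : ℂ := (-1) ^ n * (n ! : ℂ)
  have hc : c ≠ 0 := mul_ne_zero (by simp) (by simp [Nat.factorial_ne_zero])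
  have hderiv : Tendsto (deriv fun s => (Gamma s)⁻¹) (𝓝[≠] (-n)) (𝓝 c) := by
    have := ((differentiable_one_div_Gamma.contDiff (n := 1)).continuous_deriv le_rfl).tendsto (-n)
    rw [(hasDerivAt_inv_Gamma_neg_nat n).deriv] at this
    exact this.mono_left nhdsWithin_le_nhds
  have hlim := hderiv.neg.mul (((tendsto_inv_Gamma_div_add_nat n).inv₀ hc).pow 2)
  rw [show -c * c⁻¹ ^ 2 = -c⁻¹ by field_simp] at hlim
  refine hlim.congr' ?_
  filter_upwards [(hasDerivAt_inv_Gamma_neg_nat n).eventually_ne hc (c := 0),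
    self_mem_nhdsWithin] with z hGz hz
  have hzn : z + n ≠ 0 := fun h => hz (eq_neg_of_add_eq_zero_left h)
  rw [deriv_Gamma_eq_neg_deriv_inv_Gamma_div (by simpa using hGz)]
  field_simp

theorem tendsto_mul_deriv_Gamma_add_div_Gamma (k h : ℕ) :
    Tendsto (fun s : ℂ => (s + k + h) * (deriv Gamma (s + k) / Gamma s)) (𝓝[≠] (-(k + h)))
      (𝓝 (-(-1) ^ k * (k + h)! / h !)) := by
  have hshift : Tendsto (· + (k : ℂ)) (𝓝[≠] (-(k + h))) (𝓝[≠] (-h)) := by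
    have := ((Homeomorph.addRight (k : ℂ)).map_punctured_nhds_eq (-(k + h))).le
    simp only [Homeomorph.coe_addRight] at this
    rwa [show -((k : ℂ) + h) + k = -h by ring] at this
  have hdiv := tendsto_inv_Gamma_div_add_nat (k + h)
  push_cast at hdiv
  have hlim := ((tendsto_sq_mul_deriv_Gamma_neg_nat h).comp hshift).mul hdiv
  rw [show -((-1 : ℂ) ^ h * h !)⁻¹ * ((-1) ^ (k + h) * (k + h)!) =
    -(-1) ^ k * (k + h)! / (h ! : ℂ) by rw [pow_add]; field_simp] at hlim
  refine hlim.congr' ?_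
  filter_upwards [self_mem_nhdsWithin] with s (hs : s ≠ _)
  have hs' : s + k + h ≠ 0 := fun h' => hs (by linear_combination h')
  rw [Function.comp_apply, ← add_assoc, div_eq_mul_inv, div_eq_mul_inv]
  field_simp

end Complex

theorem gamma_ratio_residue_general (k h : ℕ) (hk : 2 ≤ k) :
    Tendsto (fun s : ℂ => (s + k + h) * (deriv Complex.Gamma (s + k) / Complex.Gamma s))
      (𝓝[≠] (-((k : ℂ) + h)))
      (𝓝 ((-1 : ℂ) ^ (k - 1) * ((k + h).factorial : ℂ) / (h.factorial : ℂ))) := by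
  obtain ⟨j, rfl⟩ : ∃ j, k = j + 1 := ⟨k - 1, by omega⟩
  convert Complex.tendsto_mul_deriv_Gamma_add_div_Gamma (j + 1) h using 3
  simp [pow_succ]

/-- For even `k ≥ 2` and `h ≥ 0`, the function `Γ'(s+k)/Γ(s)` has a simple pole at
`s = -(k+h)` with residue `(-1)^{k-1} (k+h)!/h!`:
`lim_{s → -(k+h)} (s+k+h) Γ'(s+k)/Γ(s) = (-1)^{k-1} (k+h)!/h!`. -/
theorem gamma_ratio_residue (k h : ℕ) (hk : 2 ≤ k) (hke : Even k) :
    Tendsto (fun s : ℂ => (s + k + h) * (deriv Complex.Gamma (s + k) / Complex.Gamma s))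
      (𝓝[≠] (-((k : ℂ) + h)))
      (𝓝 ((-1 : ℂ) ^ (k - 1) * ((k + h).factorial : ℂ) / (h.factorial : ℂ))) :=
  gamma_ratio_residue_general k h hk
end

section
/- For every integer l ≥ 0, lim_{s → −l} ( Γ(s) − (−1)^l / (l! · (s + l)) ) = ((−1)^l / l!) · ( Σ_{j=1}^{l} 1/j − γ ), where the limit is taken over complex s ≠ −l; that is, the constant term of the Laurent expansion of Γ(s) at s = −l equals ((−1)^l/l!)(H_l − γ). -/
/-!
The constant term is computed at `s = 0` and then transported to `s = -l` by the functional
equation. At `s = 0` the regular part `Γ(s) - 1/s = (Γ(1 + s) - Γ(1))/s` is a difference quotient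
of `Γ` at `1`, so it tends to `Γ'(1) = -γ`. Writing `Γ(s) = Γ(s + 1)/s`, the regular part at
`-(l+1)` is `(R_l(s + 1) + (-1)^l/(l! (l + 1)))/s` with `R_l` the regular part at `-l`;
evaluating at `s = -(l+1)`, the extra term contributes exactly the summand `1/(l + 1)` of `H_{l+1}`.
-/

open Filter Topology Complex Nat

lemma tendsto_add_const_nhdsNE {G : Type*} [TopologicalSpace G] [AddGroup G]
    [IsTopologicalAddGroup G] {a b : G} (c : G) (h : a + c = b) :
    Tendsto (· + c) (𝓝[≠] a) (𝓝[≠] b) := by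
  rw [← h, ← map_add_right_nhdsNE]
  exact tendsto_map

noncomputable def gammaRegularPart (l : ℕ) (s : ℂ) : ℂ :=
  Gamma s - (-1) ^ l / (l ! * (s + l))

lemma gammaRegularPart_succ {l : ℕ} {s : ℂ} (hs : s ≠ 0) (hsl : s + (l + 1 : ℕ) ≠ 0) :
    gammaRegularPart (l + 1) s =
      (gammaRegularPart l (s + 1) + (-1) ^ l / (l ! * (l + 1))) / s := by
  have hs1 : s + 1 + l ≠ 0 := by push_cast at hsl; convert hsl using 1; ring
  unfold gammaRegularPart
  rw [Gamma_add_one s hs, factorial_succ]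
  push_cast at hsl ⊢
  field_simp
  ring

lemma tendsto_gammaRegularPart_zero :
    Tendsto (gammaRegularPart 0) (𝓝[≠] 0) (𝓝 (-(Real.eulerMascheroniConstant : ℂ))) := by
  refine hasDerivAt_Gamma_one.tendsto_slope_zero.congr' ?_
  filter_upwards [self_mem_nhdsWithin] with t (ht : t ≠ 0)
  rw [add_comm, Gamma_add_one t ht, Gamma_one, smul_eq_mul, gammaRegularPart]
  simp only [pow_zero, factorial_zero, cast_one, CharP.cast_eq_zero, add_zero, one_mul]
  field_simp

lemma tendsto_gammaRegularPart (l : ℕ) :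
    Tendsto (gammaRegularPart l) (𝓝[≠] (-l))
      (𝓝 ((-1) ^ l / l ! *
        ((∑ j ∈ Finset.Icc 1 l, (1 : ℂ) / j) - Real.eulerMascheroniConstant))) := by
  induction l with
  | zero => simpa using tendsto_gammaRegularPart_zero
  | succ l ih =>
    have hpole : -((l + 1 : ℕ) : ℂ) ≠ 0 :=
      neg_ne_zero.mpr (Nat.cast_ne_zero.mpr l.succ_ne_zero)
    have hshift : Tendsto (· + 1) (𝓝[≠] (-((l + 1 : ℕ) : ℂ))) (𝓝[≠] (-(l : ℂ))) :=
      tendsto_add_const_nhdsNE 1 (by push_cast; ring)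
    have hrec : gammaRegularPart (l + 1) =ᶠ[𝓝[≠] (-((l + 1 : ℕ) : ℂ))]
        fun s => (gammaRegularPart l (s + 1) + (-1) ^ l / (l ! * (l + 1))) / s := by
      filter_upwards [self_mem_nhdsWithin,
        (eventually_ne_nhds hpole).filter_mono nhdsWithin_le_nhds] with s (hsl : s ≠ _) hs
      exact gammaRegularPart_succ hs (by contrapose! hsl; linear_combination hsl)
    convert ((ih.comp hshift).add_const _).div (tendsto_id.mono_left nhdsWithin_le_nhds) hpole
      |>.congr' hrec.symm using 2
    rw [Finset.sum_Icc_succ_top (by omega), factorial_succ, pow_succ]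
    push_cast
    field_simp
    ring

/-- The constant term of the Laurent expansion of `Γ(s)` at `s = -l` equals
`((-1)^l / l!) (H_l - γ)`:
`lim_{s → -l} (Γ(s) - (-1)^l/(l! (s+l))) = ((-1)^l/l!) (∑_{j=1}^{l} 1/j - γ)`. -/
theorem gamma_laurent_constant_term (l : ℕ) :
    Tendsto (fun s : ℂ => Complex.Gamma s - (-1 : ℂ) ^ l / ((l.factorial : ℂ) * (s + l)))
      (𝓝[≠] (-(l : ℂ)))
      (𝓝 (((-1 : ℂ) ^ l / (l.factorial : ℂ)) *
        ((∑ j ∈ Finset.Icc 1 l, (1 : ℂ) / j) - (Real.eulerMascheroniConstant : ℂ)))) :=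
  tendsto_gammaRegularPart l
end

section
/- For every positive integer n, the derivative of the Riemann zeta function at −2n satisfies ζ'(−2n) = (−1)^n · (2n)! · ζ(2n+1) / (2 · (2π)^{2n}); equivalently, 1/ζ'(−2n) = (−1)^n · 2 · (2π)^{2n} / ((2n)! · ζ(2n+1)). -/
/-!
Differentiate the functional equation `ζ(1 - s) = 2 (2π)^(-s) Γ(s) cos(πs/2) ζ(s)` at
`s = 2n + 1`. The cosine vanishes there, so only the term carrying its derivative
`-(π/2) sin(πs/2) = -(π/2) (-1)^n` survives, and `Γ(2n + 1) = (2n)!`.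
-/

open scoped Real

open Complex

lemma ne_neg_natCast_of_pos_re {s : ℂ} (hs : 0 < s.re) (n : ℕ) : s ≠ -n := by
  rintro rfl
  simp only [neg_re, natCast_re] at hs
  linarith [n.cast_nonneg (α := ℝ)]

lemma riemannZeta_one_sub_of_one_lt_re {s : ℂ} (hs : 1 < s.re) :
    riemannZeta (1 - s) = 2 * (2 * π) ^ (-s) * Gamma s * cos (π * s / 2) * riemannZeta s :=
  riemannZeta_one_sub (ne_neg_natCast_of_pos_re (by linarith)) (by rintro rfl; simp at hs)

lemma hasDerivAt_cpow_mul_Gamma_mul_cos_of_cos_eq_zero {s : ℂ} (hs : ∀ n : ℕ, s ≠ -n)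
    (hcos : cos (π * s / 2) = 0) :
    HasDerivAt (fun z ↦ 2 * (2 * π) ^ (-z) * Gamma z * cos (π * z / 2))
      (-(π * (2 * π) ^ (-s) * Gamma s * sin (π * s / 2))) s := by
  have h2π : (2 * π : ℂ) ≠ 0 := by simp [Real.pi_ne_zero]
  have hpow := ((hasDerivAt_neg s).const_cpow (c := 2 * π) (Or.inl h2π)).const_mul 2
  have hcos' := ((hasDerivAt_id' s).const_mul (π : ℂ)).div_const 2 |>.ccos
  refine ((hpow.mul (differentiableAt_Gamma s hs).hasDerivAt).mul hcos').congr_deriv ?_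
  simp only [hcos, Pi.mul_apply, mul_zero, zero_add]
  ring

lemma deriv_riemannZeta_one_sub_of_cos_eq_zero {s : ℂ} (hs : 1 < s.re)
    (hcos : cos (π * s / 2) = 0) :
    deriv riemannZeta (1 - s)
      = π * (2 * π) ^ (-s) * Gamma s * sin (π * s / 2) * riemannZeta s := by
  have hζ : HasDerivAt (fun z ↦ riemannZeta (1 - z)) (deriv riemannZeta (1 - s) * -1) s := by
    have hs₁ : 1 - s ≠ 1 := sub_eq_self.not.mpr (by rintro rfl; norm_num at hs)
    exact (differentiableAt_riemannZeta hs₁).hasDerivAt.comp s ((hasDerivAt_id s).const_sub 1)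
  have hfe : (fun z ↦ riemannZeta (1 - z)) =ᶠ[nhds s]
      fun z ↦ 2 * (2 * π) ^ (-z) * Gamma z * cos (π * z / 2) * riemannZeta z := by
    filter_upwards [(isOpen_lt continuous_const continuous_re).mem_nhds hs] with z hz
    exact riemannZeta_one_sub_of_one_lt_re hz
  have hrhs := (hasDerivAt_cpow_mul_Gamma_mul_cos_of_cos_eq_zero
    (ne_neg_natCast_of_pos_re (by linarith)) hcos).mul
    (differentiableAt_riemannZeta (s := s) (by rintro rfl; simp at hs)).hasDerivAt
  have hderiv := hζ.unique (hrhs.congr_of_eventuallyEq hfe)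
  simp only [hcos, mul_zero, zero_mul, add_zero] at hderiv
  linear_combination -hderiv

lemma cos_pi_mul_two_mul_nat_add_one_div_two (n : ℕ) : cos (π * (2 * n + 1) / 2) = 0 :=
  cos_eq_zero_iff.mpr ⟨n, by push_cast; ring⟩

lemma sin_pi_mul_two_mul_nat_add_one_div_two (n : ℕ) :
    sin (π * (2 * n + 1) / 2) = (-1) ^ n := by
  rw [show (π * (2 * n + 1) / 2 : ℂ) = ((n * π : ℝ) : ℂ) + π / 2 by push_cast; ring,
    sin_add_pi_div_two, ← ofReal_cos, Real.cos_nat_mul_pi]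
  norm_num

theorem deriv_riemannZeta_neg_two_mul_nat {n : ℕ} (hn : n ≠ 0) :
    deriv riemannZeta (-(2 * n : ℂ))
      = (-1) ^ n * (2 * n).factorial * riemannZeta (2 * n + 1) / (2 * (2 * π) ^ (2 * n)) := by
  have hre : 1 < (2 * n + 1 : ℂ).re := by
    simpa using Nat.pos_of_ne_zero hn
  have hΓ : Gamma (2 * n + 1) = (2 * n).factorial := mod_cast Gamma_nat_eq_factorial (2 * n)
  have hpow : (2 * π : ℂ) ^ (-(2 * n + 1 : ℂ)) = ((2 * π : ℂ) ^ (2 * n + 1))⁻¹ := by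
    rw [cpow_neg, show (2 * n + 1 : ℂ) = (2 * n + 1 : ℕ) by norm_num, cpow_natCast]
  have h2π : (2 * π : ℂ) ≠ 0 := by simp [Real.pi_ne_zero]
  rw [show -(2 * n : ℂ) = 1 - (2 * n + 1) by ring,
    deriv_riemannZeta_one_sub_of_cos_eq_zero hre (cos_pi_mul_two_mul_nat_add_one_div_two n),
    sin_pi_mul_two_mul_nat_add_one_div_two, hΓ, hpow, pow_succ]
  field_simp

/-- For every positive integer `n`,
`ζ'(-2n) = (-1)^n (2n)! ζ(2n+1) / (2 (2π)^{2n})`; equivalently,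
`1/ζ'(-2n) = (-1)^n 2 (2π)^{2n} / ((2n)! ζ(2n+1))`. -/
theorem deriv_riemannZeta_neg_even (n : ℕ) (hn : 1 ≤ n) :
    deriv riemannZeta (-(2 * n : ℕ))
        = (-1 : ℂ) ^ n * ((2 * n).factorial : ℂ) * riemannZeta (2 * n + 1)
          / (2 * (2 * (π : ℂ)) ^ (2 * n))
    ∧ 1 / deriv riemannZeta (-(2 * n : ℕ))
        = (-1 : ℂ) ^ n * 2 * (2 * (π : ℂ)) ^ (2 * n)
          / (((2 * n).factorial : ℂ) * riemannZeta (2 * n + 1)) := by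
  have hderiv : deriv riemannZeta (-(2 * n : ℕ))
      = (-1 : ℂ) ^ n * ((2 * n).factorial : ℂ) * riemannZeta (2 * n + 1)
        / (2 * (2 * (π : ℂ)) ^ (2 * n)) := by
    push_cast
    exact deriv_riemannZeta_neg_two_mul_nat (by omega)
  refine ⟨hderiv, ?_⟩
  rw [hderiv]
  simp only [div_eq_mul_inv, mul_inv, inv_inv, ← inv_pow, inv_neg, inv_one]
  ring
end
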